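/- arXiv:2106.09829 — 3 statements merged into one kernel-verified Lean document; each statement's English description precedes it below -/
import Mathlib

section
/- Let G be a finite connected simple graph of order n ≥ 2, with subdivision graph S(G), and let V denote the set of vertices of S(G) coming from V(G) and S the set of vertices of S(G) coming from E(G). Then every maximum independent set I of S(G) satisfies I = V or I = S if and only if G is a tree or the minimum degree of G satisfies δ(G) ≥ 2. -/
/-- The subdivision graph `S(G)`: vertices are `V(G) ⊕ E(G)`, with `v ∈ V(G)` adjacent to
`e ∈ E(G)` iff `v` is an endpoint of `e`. -/
def subdivision {V : Type*} (G : SimpleGraph V) : SimpleGraph (V ⊕ G.edgeSet) where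
  Adj a b :=
    match a, b with
    | Sum.inl v, Sum.inr e => v ∈ (e : Sym2 V)
    | Sum.inr e, Sum.inl v => v ∈ (e : Sym2 V)
    | _, _ => False
  symm := ⟨by rintro (v | e) (w | f) h <;> simp_all⟩
  loopless := ⟨by rintro (v | e) h <;> simp_all⟩

/-! An independent set of `S(G)` consists of a vertex set `A` and an edge set `B` no edge of which
meets `A`, so it has at most `|A| + m - |E(A)|` elements, `E(A)` being the set of edges meeting
`A`. If `A` misses a vertex `r` of the connected graph `G`, sending each `a ∈ A` to the first edge
of a shortest path from `a` to `r` injects `A` into `E(A)`; when `δ(G) ≥ 2`, the vertex of `A`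
farthest from `r` has a second edge outside the image. Hence `α(S(G)) = max(n, m)`, and a maximum
independent set other than `V` and `S` has size `m` and `∅ ≠ A ≠ V(G)`, which is impossible for a
tree (`m < n`) and when `δ(G) ≥ 2`. Conversely, if `G` is not a tree (`m ≥ n`) and has a pendant
vertex `v` with edge `e`, then `{v} ∪ (S \ {e})` is a maximum independent set. -/

open Set

namespace SimpleGraph

variable {V : Type*} {G : SimpleGraph V}

theorem isIndepSet_iff_forall_not_adj {s : Set V} :
    G.IsIndepSet s ↔ ∀ a ∈ s, ∀ b ∈ s, ¬G.Adj a b :=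
  ⟨fun h _ ha _ hb hab => h ha hb hab.ne hab, fun h a ha b hb _ => h a ha b hb⟩

def edgesMeeting (G : SimpleGraph V) (A : Set V) : Set (Sym2 V) :=
  {e ∈ G.edgeSet | ∃ a ∈ A, a ∈ e}

theorem edgesMeeting_subset (A : Set V) : G.edgesMeeting A ⊆ G.edgeSet := fun _ he => he.1

theorem mapsTo_mk_edgesMeeting {p : V → V} {A : Set V} (hp : ∀ a ∈ A, G.Adj a (p a)) :
    MapsTo (fun a => s(a, p a)) A (G.edgesMeeting A) :=
  fun a ha => ⟨hp a ha, a, ha, Sym2.mem_mk_left _ _⟩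

theorem injOn_mk_of_lt (d : V → ℕ) {p : V → V} {A : Set V} (hp : ∀ a ∈ A, d (p a) < d a) :
    A.InjOn fun a => s(a, p a) := by
  intro a ha b hb hab
  rcases Sym2.eq_iff.1 hab with ⟨h, -⟩ | ⟨hab, hba⟩
  · exact h
  · have h₁ := hp a ha
    have h₂ := hp b hb
    rw [hba] at h₁
    rw [← hab] at h₂
    omega

theorem mk_notMem_image_of_forall_le (d : V → ℕ) {p : V → V} {A : Set V}
    (hp : ∀ a ∈ A, d (p a) < d a) {a c : V} (hmax : ∀ b ∈ A, d b ≤ d a) (hc : c ≠ p a) :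
    s(a, c) ∉ (fun a => s(a, p a)) '' A := by
  rintro ⟨b, hb, hba⟩
  rcases Sym2.eq_iff.1 hba with ⟨rfl, h⟩ | ⟨-, hpb⟩
  · exact hc h.symm
  · have := hp b hb
    have := hmax b hb
    rw [hpb] at *
    omega

theorem Connected.exists_adj_dist_lt (hG : G.Connected) {a r : V} (h : a ≠ r) :
    ∃ b, G.Adj a b ∧ G.dist b r < G.dist a r := by
  obtain ⟨p, hp⟩ := hG.exists_walk_length_eq_dist a r
  cases p with
  | nil => exact absurd rfl h
  | cons hab q =>
    refine ⟨_, hab, ?_⟩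
    have := dist_le q
    simp only [Walk.length_cons] at hp
    omega

theorem Connected.exists_adj_lt_of_ne_univ (hG : G.Connected) {A : Set V} (hA : A ≠ univ) :
    ∃ (d : V → ℕ) (p : V → V), ∀ a ∈ A, G.Adj a (p a) ∧ d (p a) < d a := by
  obtain ⟨r, hr⟩ := (ne_univ_iff_exists_notMem A).1 hA
  choose! p hp using fun a (ha : a ∈ A) => hG.exists_adj_dist_lt (ne_of_mem_of_not_mem ha hr)
  exact ⟨(G.dist · r), p, hp⟩

variable [Finite V]

theorem Connected.ncard_le_ncard_edgesMeeting (hG : G.Connected) {A : Set V} (hA : A ≠ univ) :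
    A.ncard ≤ (G.edgesMeeting A).ncard := by
  obtain ⟨d, p, hp⟩ := hG.exists_adj_lt_of_ne_univ hA
  exact ncard_le_ncard_of_injOn _ (mapsTo_mk_edgesMeeting fun a ha => (hp a ha).1)
    (injOn_mk_of_lt d fun a ha => (hp a ha).2)

theorem Connected.ncard_lt_ncard_edgesMeeting (hG : G.Connected) {A : Set V} (hA : A ≠ univ)
    (hne : A.Nonempty) (hδ : ∀ v, 2 ≤ (G.neighborSet v).ncard) :
    A.ncard < (G.edgesMeeting A).ncard := by
  obtain ⟨d, p, hp⟩ := hG.exists_adj_lt_of_ne_univ hA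
  obtain ⟨a, ha, hmax⟩ := exists_max_image A d A.toFinite hne
  obtain ⟨c, hac, hc⟩ : ∃ c, G.Adj a c ∧ c ≠ p a := by
    obtain ⟨c₁, c₂, hc₁, hc₂, hc₁₂⟩ := (one_lt_ncard_iff).1 (hδ a)
    by_cases h : c₁ = p a
    · exact ⟨c₂, hc₂, fun h' => hc₁₂ (h.trans h'.symm)⟩
    · exact ⟨c₁, hc₁, h⟩
  have himage : (fun a => s(a, p a)) '' A ⊂ G.edgesMeeting A :=
    (ssubset_iff_of_subset (mapsTo_mk_edgesMeeting fun a ha => (hp a ha).1).image_subset).2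
      ⟨s(a, c), ⟨hac, a, ha, Sym2.mem_mk_left _ _⟩,
        mk_notMem_image_of_forall_le d (fun a ha => (hp a ha).2) hmax hc⟩
  rw [← (injOn_mk_of_lt d fun a ha => (hp a ha).2).ncard_image]
  exact ncard_lt_ncard himage

theorem Connected.card_le_ncard_edgeSet_of_not_isTree (hG : G.Connected) (hT : ¬G.IsTree) :
    Nat.card V ≤ G.edgeSet.ncard := by
  have := hG.card_vert_le_card_edgeSet_add_one
  have : Nat.card G.edgeSet + 1 ≠ Nat.card V := fun h =>
    hT (isTree_iff_connected_and_card.2 ⟨hG, h⟩)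
  rw [Nat.card_coe_set_eq] at *
  omega

theorem Connected.existsUnique_mem_edgeSet_of_ncard_neighborSet_lt_two (hG : G.Connected)
    (hn : 2 ≤ Nat.card V) {v : V} (hv : (G.neighborSet v).ncard < 2) :
    ∃! e : G.edgeSet, v ∈ (e : Sym2 V) := by
  have : Nontrivial V := Finite.one_lt_card_iff_nontrivial.1 hn
  obtain ⟨w, hvw⟩ := hG.preconnected.exists_adj_of_nontrivial v
  refine ⟨⟨s(v, w), hvw⟩, Sym2.mem_mk_left _ _, fun ⟨e, he⟩ hve => ?_⟩
  obtain ⟨u, rfl⟩ := Sym2.mem_iff_exists.1 hve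
  have hu : u = w := (ncard_le_one (s := G.neighborSet v)).1 (by omega) u he w hvw
  simp [hu]

end SimpleGraph

theorem Set.ncard_preimage_inl_add_ncard_preimage_inr {α β : Type*} [Finite α] [Finite β]
    (s : Set (α ⊕ β)) : (Sum.inl ⁻¹' s).ncard + (Sum.inr ⁻¹' s).ncard = s.ncard := by
  conv_rhs => rw [← image_preimage_inl_union_image_preimage_inr s]
  rw [ncard_union_eq disjoint_image_inl_image_inr,
    ncard_image_of_injective _ Sum.inl_injective, ncard_image_of_injective _ Sum.inr_injective]

open SimpleGraph

namespace subdivision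

variable {V : Type*} {G : SimpleGraph V} {J : Set (V ⊕ G.edgeSet)}

theorem isIndepSet_range_inl : (subdivision G).IsIndepSet (range Sum.inl) := by
  rintro _ ⟨v, rfl⟩ _ ⟨w, rfl⟩ - h
  exact h

theorem isIndepSet_range_inr : (subdivision G).IsIndepSet (range Sum.inr) := by
  rintro _ ⟨e, rfl⟩ _ ⟨f, rfl⟩ - h
  exact h

theorem notMem_of_isIndepSet (hJ : (subdivision G).IsIndepSet J) {v : V} {e : G.edgeSet}
    (hv : Sum.inl v ∈ J) (he : Sum.inr e ∈ J) : v ∉ (e : Sym2 V) :=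
  hJ hv he Sum.inl_ne_inr

theorem eq_range_inl_of_preimage_inl_eq_univ (hJ : (subdivision G).IsIndepSet J)
    (hA : Sum.inl ⁻¹' J = univ) : J = range Sum.inl := by
  have hV : ∀ v, Sum.inl v ∈ J := eq_univ_iff_forall.1 hA
  ext (v | e)
  · simp [hV]
  · simp only [mem_range, reduceCtorEq, exists_false, iff_false]
    intro he
    exact notMem_of_isIndepSet hJ (hV _) he (Sym2.out_fst_mem e.1)

theorem subset_range_inr_of_preimage_inl_eq_empty (hA : Sum.inl ⁻¹' J = ∅) :
    J ⊆ range Sum.inr := by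
  rw [← image_preimage_inl_union_image_preimage_inr J, hA, image_empty, empty_union]
  exact image_subset_range _ _

theorem isIndepSet_insert_inl_image_inr_compl {v : V} {e : G.edgeSet}
    (he : ∀ f : G.edgeSet, v ∈ (f : Sym2 V) → f = e) :
    (subdivision G).IsIndepSet (insert (Sum.inl v) (Sum.inr '' {e}ᶜ)) := by
  refine (isIndepSet_range_inr.mono (image_subset_range _ _)).insert ?_
  rintro _ ⟨f, hf, rfl⟩ -
  have hvf : v ∉ (f : Sym2 V) := fun h => hf (he f h)
  exact ⟨hvf, hvf⟩

variable [Finite V]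

theorem ncard_add_ncard_edgesMeeting_le (hJ : (subdivision G).IsIndepSet J) :
    J.ncard + (G.edgesMeeting (Sum.inl ⁻¹' J)).ncard ≤
      (Sum.inl ⁻¹' J).ncard + G.edgeSet.ncard := by
  have hB : Subtype.val '' (Sum.inr ⁻¹' J) ⊆ G.edgeSet \ G.edgesMeeting (Sum.inl ⁻¹' J) := by
    rintro _ ⟨e, he, rfl⟩
    exact ⟨e.2, fun ⟨_, v, hv, hve⟩ => notMem_of_isIndepSet hJ hv he hve⟩
  have := ncard_le_ncard hB
  rw [ncard_image_of_injective _ Subtype.val_injective,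
    ncard_sdiff (G.edgesMeeting_subset _)] at this
  have := ncard_le_ncard (G.edgesMeeting_subset (Sum.inl ⁻¹' J))
  have := ncard_preimage_inl_add_ncard_preimage_inr J
  omega

theorem ncard_le_of_preimage_inl_ne_univ (hG : G.Connected) (hJ : (subdivision G).IsIndepSet J)
    (hA : Sum.inl ⁻¹' J ≠ univ) : J.ncard ≤ G.edgeSet.ncard := by
  have := hG.ncard_le_ncard_edgesMeeting hA
  have := ncard_add_ncard_edgesMeeting_le hJ
  omega

theorem ncard_lt_of_preimage_inl_ne_univ (hG : G.Connected) (hJ : (subdivision G).IsIndepSet J)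
    (hA : Sum.inl ⁻¹' J ≠ univ) (hne : (Sum.inl ⁻¹' J).Nonempty)
    (hδ : ∀ v, 2 ≤ (G.neighborSet v).ncard) : J.ncard < G.edgeSet.ncard := by
  have := hG.ncard_lt_ncard_edgesMeeting hA hne hδ
  have := ncard_add_ncard_edgesMeeting_le hJ
  omega

theorem ncard_le_max (hG : G.Connected) (hJ : (subdivision G).IsIndepSet J) :
    J.ncard ≤ max (Nat.card V) G.edgeSet.ncard := by
  by_cases hA : Sum.inl ⁻¹' J = univ
  · rw [eq_range_inl_of_preimage_inl_eq_univ hJ hA, ncard_range_of_injective Sum.inl_injective]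
    exact le_max_left _ _
  · exact (ncard_le_of_preimage_inl_ne_univ hG hJ hA).trans (le_max_right _ _)

theorem exists_ne_range_inl_ne_range_inr (hG : G.Connected) (hn : 2 ≤ Nat.card V)
    (hT : ¬G.IsTree) {v : V} (hv : (G.neighborSet v).ncard < 2) :
    ∃ I, (subdivision G).IsIndepSet I ∧
      (∀ J, (subdivision G).IsIndepSet J → J.ncard ≤ I.ncard) ∧
      I ≠ range Sum.inl ∧ I ≠ range Sum.inr := by
  have hm := hG.card_le_ncard_edgeSet_of_not_isTree hT
  obtain ⟨e, -, he⟩ := hG.existsUnique_mem_edgeSet_of_ncard_neighborSet_lt_two hn hv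
  set I := insert (Sum.inl v) (Sum.inr '' {e}ᶜ)
  have hI : I.ncard = G.edgeSet.ncard := by
    rw [ncard_insert_of_notMem (by simp), ncard_image_of_injective _ Sum.inr_injective,
      ncard_compl, ncard_singleton, Nat.card_coe_set_eq]
    omega
  obtain ⟨f, hfe⟩ : ∃ f : G.edgeSet, f ≠ e := by
    have : Nontrivial G.edgeSet :=
      Finite.one_lt_card_iff_nontrivial.1 (by rw [Nat.card_coe_set_eq]; omega)
    exact exists_ne e
  refine ⟨I, isIndepSet_insert_inl_image_inr_compl he, fun J hJ => ?_, fun h => ?_, fun h => ?_⟩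
  · exact (ncard_le_max hG hJ).trans (by rw [hI]; omega)
  · have hf : Sum.inr f ∈ I := mem_insert_of_mem _ ⟨f, hfe, rfl⟩
    obtain ⟨w, hw⟩ := h ▸ hf
    exact Sum.inl_ne_inr hw
  · have hv : Sum.inl v ∈ I := mem_insert _ _
    obtain ⟨g, hg⟩ := h ▸ hv
    exact Sum.inr_ne_inl hg

theorem eq_range_inl_or_eq_range_inr (hG : G.Connected) {I : Set (V ⊕ G.edgeSet)}
    (hI : (subdivision G).IsIndepSet I)
    (hmax : ∀ J, (subdivision G).IsIndepSet J → J.ncard ≤ I.ncard)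
    (h : G.IsTree ∨ ∀ v, 2 ≤ (G.neighborSet v).ncard) :
    I = range Sum.inl ∨ I = range Sum.inr := by
  have hV := ncard_range_of_injective (Sum.inl_injective (β := G.edgeSet)) ▸
    hmax _ isIndepSet_range_inl
  have hE := ncard_range_of_injective (Sum.inr_injective (α := V)) ▸ hmax _ isIndepSet_range_inr
  rw [Nat.card_coe_set_eq] at hE
  by_cases hA : Sum.inl ⁻¹' I = univ
  · exact .inl (eq_range_inl_of_preimage_inl_eq_univ hI hA)
  have hA₀ : Sum.inl ⁻¹' I = ∅ := by
    by_contra hne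
    rcases h with hT | hδ
    · have := (isTree_iff_connected_and_card.1 hT).2
      have := ncard_le_of_preimage_inl_ne_univ hG hI hA
      rw [Nat.card_coe_set_eq] at *
      omega
    · have := ncard_lt_of_preimage_inl_ne_univ hG hI hA (nonempty_iff_ne_empty.2 hne) hδ
      omega
  refine .inr (eq_of_subset_of_ncard_le (subset_range_inr_of_preimage_inl_eq_empty hA₀) ?_)
  rwa [ncard_range_of_injective Sum.inr_injective, Nat.card_coe_set_eq]

end subdivision

/-- For a finite connected simple graph `G` of order `n ≥ 2`, every maximum
independent set `I` of `S(G)` satisfies `I = V` or `I = S` (where `V` and `S` are the vertex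
and edge sides of `S(G)`) if and only if `G` is a tree or `δ(G) ≥ 2`. -/
theorem maxIndepSets_subdivision {V : Type*} [Fintype V] (G : SimpleGraph V)
    (hconn : G.Connected) (hn : 2 ≤ Fintype.card V) :
    (∀ I : Set (V ⊕ G.edgeSet),
        (∀ a ∈ I, ∀ b ∈ I, ¬ (subdivision G).Adj a b) →
        (∀ J : Set (V ⊕ G.edgeSet),
          (∀ a ∈ J, ∀ b ∈ J, ¬ (subdivision G).Adj a b) → J.ncard ≤ I.ncard) →
        I = Set.range Sum.inl ∨ I = Set.range Sum.inr) ↔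
      (G.IsTree ∨ ∀ v : V, 2 ≤ (G.neighborSet v).ncard) := by
  simp only [← isIndepSet_iff_forall_not_adj]
  refine ⟨fun H => ?_, fun h I hI hmax => subdivision.eq_range_inl_or_eq_range_inr hconn hI hmax h⟩
  by_contra! ⟨hT, v, hv⟩
  obtain ⟨I, hI, hmax, hinl, hinr⟩ := subdivision.exists_ne_range_inl_ne_range_inr hconn
    (Fintype.card_eq_nat_card ▸ hn) hT hv
  exact (H I hI hmax).elim hinl hinr
end

section
/- Let G be a finite connected simple graph of order n ≥ 2 and size m, with subdivision graph S(G), and let V denote the set of vertices of S(G) coming from V(G) and S the set of vertices of S(G) coming from E(G). The following statements are equivalent: (i) G contains at least one cycle; (ii) β(S(G)) = |V| = n; (iii) ρ(S(G)) = |S| = m. -/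
/-- A subgraph `H` of `G` is a cycle if it is connected (in particular nonempty) and every
vertex of `H` has exactly two neighbours in `H`; for finite graphs this characterizes the
cycle graphs. -/
def SimpleGraph.Subgraph.IsCycleSubgraph {V : Type*} {G : SimpleGraph V}
    (H : G.Subgraph) : Prop :=
  H.coe.Connected ∧ ∀ v ∈ H.verts, (H.neighborSet v).ncard = 2

/-!
The edges of `S(G)` are the incidences `(v, e)` with `v ∈ e`. Hence a matching of `S(G)` of size
`n` is an injective choice of an incident edge at every vertex of `G`, and an edge cover of size
`m` is a choice of an endpoint of every edge that hits every vertex; each kind of choice yields the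
other. An injective choice of incident edges gives `m ≥ n`, so the connected graph `G` is not a
tree. Conversely, if `G` has a cycle, deleting one of its edges `ab` leaves `G` connected; then
every vertex other than `a` takes the first edge of a shortest path to `a`, and `a` takes `ab`.
-/

open Function

theorem exists_injective_rel_iff_exists_surjective_rel {α β : Type*} {r : α → β → Prop}
    (hr : ∀ b, ∃ a, r a b) :
    (∃ g : α → β, Injective g ∧ ∀ a, r a (g a)) ↔ (∃ f : β → α, Surjective f ∧ ∀ b, r (f b) b) := by
  classical
  constructor
  · rintro ⟨g, hg, hrg⟩
    refine ⟨extend g id fun b => (hr b).choose, fun a => ⟨g a, hg.extend_apply _ _ a⟩, fun b => ?_⟩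
    by_cases hb : ∃ a, g a = b
    · obtain ⟨a, rfl⟩ := hb
      rw [hg.extend_apply]
      exact hrg a
    · rw [extend_apply' _ _ _ hb]
      exact (hr b).choose_spec
  · rintro ⟨f, hf, hrf⟩
    refine ⟨surjInv hf, injective_surjInv hf, fun a => ?_⟩
    simpa only [surjInv_eq hf] using hrf (surjInv hf a)

namespace SimpleGraph

variable {V : Type*} {G : SimpleGraph V}

theorem Walk.IsCycle.isCycleSubgraph_toSubgraph {u : V} {c : G.Walk u u} (hc : c.IsCycle) :
    c.toSubgraph.IsCycleSubgraph :=
  ⟨c.toSubgraph_connected.coe,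
    fun _ hv => hc.ncard_neighborSet_toSubgraph_eq_two (c.mem_verts_toSubgraph.mp hv)⟩

theorem Subgraph.IsCycleSubgraph.ncard_neighborSet_coe {H : G.Subgraph} (hH : H.IsCycleSubgraph)
    (v : H.verts) : (H.coe.neighborSet v).ncard = 2 := by
  rw [← Nat.card_coe_set_eq, Nat.card_congr (H.coeNeighborSetEquiv v),
    Nat.card_coe_set_eq, hH.2 v v.2]

theorem Subgraph.IsCycleSubgraph.not_isAcyclic [Finite V] {H : G.Subgraph}
    (hH : H.IsCycleSubgraph) : ¬G.IsAcyclic := by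
  obtain ⟨v⟩ := hH.1.nonempty
  have hv : (H.coe.neighborSet v).Nonempty :=
    Set.nonempty_of_ncard_ne_zero (by rw [hH.ncard_neighborSet_coe]; decide)
  obtain ⟨c, hc, -⟩ := IsCycles.exists_cycle_toSubgraph_verts_eq_connectedComponentSupp
    (fun w _ => hH.ncard_neighborSet_coe w) (c := H.coe.connectedComponentMk v) rfl hv
  exact fun hG => hG.subgraph H c hc

theorem exists_isCycleSubgraph_iff_not_isAcyclic [Finite V] :
    (∃ H : G.Subgraph, H.IsCycleSubgraph) ↔ ¬G.IsAcyclic := by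
  refine ⟨fun ⟨H, hH⟩ => hH.not_isAcyclic, fun h => ?_⟩
  obtain ⟨u, c, hc⟩ : ∃ u, ∃ c : G.Walk u u, c.IsCycle := by simpa [IsAcyclic] using h
  exact ⟨_, hc.isCycleSubgraph_toSubgraph⟩

theorem Reachable.exists_adj_dist_lt {u r : V} (h : G.Reachable u r) (hu : u ≠ r) :
    ∃ w, G.Adj u w ∧ G.dist w r < G.dist u r := by
  obtain ⟨p, hp⟩ := h.exists_walk_length_eq_dist
  cases p with
  | nil => exact absurd rfl hu
  | cons hadj q =>
    rw [Walk.length_cons] at hp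
    exact ⟨_, hadj, (dist_le q).trans_lt (by omega)⟩

theorem Preconnected.exists_injective_incidentEdge_ne (hG : G.Preconnected) (r : V) :
    ∃ g : {v // v ≠ r} → Sym2 V, Injective g ∧ ∀ v, g v ∈ G.edgeSet ∧ (v : V) ∈ g v := by
  choose parent hadj hdist using fun v : {v // v ≠ r} => (hG v r).exists_adj_dist_lt v.2
  refine ⟨fun v => s(v, parent v), fun v w hvw => ?_, fun v => ⟨hadj v, Sym2.mem_mk_left _ _⟩⟩
  rcases Sym2.eq_iff.mp hvw with ⟨h, -⟩ | ⟨hv, hw⟩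
  · exact Subtype.ext h
  · exact absurd (hw ▸ hdist v) (hv ▸ hdist w).not_gt

theorem Connected.exists_injective_incidentEdge_of_not_isAcyclic (hG : G.Connected)
    (hcyc : ¬G.IsAcyclic) : ∃ g : V → G.edgeSet, Injective g ∧ ∀ v, v ∈ (g v : Sym2 V) := by
  classical
  obtain ⟨a, b, hab, hbr⟩ : ∃ a b, G.Adj a b ∧ ¬G.IsBridge s(a, b) := by
    simpa [isAcyclic_iff_forall_adj_isBridge] using hcyc
  obtain ⟨g, hg, hgG⟩ :=
    (hG.connected_delete_edge_of_not_isBridge hbr).preconnected.exists_injective_incidentEdge_ne a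
  simp only [edgeSet_deleteEdges, Set.mem_sdiff, Set.mem_singleton_iff] at hgG
  refine ⟨fun v => if h : v = a then ⟨s(a, b), hab⟩ else ⟨g ⟨v, h⟩, (hgG _).1.1⟩, ?_, fun v => ?_⟩
  · refine Injective.dite (· = a) (f := fun _ => ⟨s(a, b), hab⟩)
      (f' := fun v => ⟨g v, (hgG v).1.1⟩) (fun v w _ => Subtype.ext (v.2.trans w.2.symm))
      (fun v w h => hg (congrArg Subtype.val h)) fun h => (hgG _).1.2 (congrArg Subtype.val h).symm
  by_cases h : v = a
  · simp [h]
  · simpa [h] using (hgG ⟨v, h⟩).2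

theorem Connected.not_isAcyclic_iff_exists_injective_incidentEdge [Finite V] (hG : G.Connected) :
    ¬G.IsAcyclic ↔ ∃ g : V → G.edgeSet, Injective g ∧ ∀ v, v ∈ (g v : Sym2 V) := by
  refine ⟨hG.exists_injective_incidentEdge_of_not_isAcyclic, fun ⟨g, hg, _⟩ hac => ?_⟩
  have hcard := (isTree_iff_connected_and_card.mp ⟨hG, hac⟩).2
  have := Nat.card_le_card_of_injective g hg
  omega

end SimpleGraph

/-- `β(K) = n` is `IsGreatest (matchingCards K) n`. -/
def matchingCards {W : Type*} (K : SimpleGraph W) : Set ℕ :=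
  {k | ∃ M : Set (Sym2 W), M ⊆ K.edgeSet ∧
    (∀ e ∈ M, ∀ f ∈ M, e ≠ f → ∀ x, ¬ (x ∈ e ∧ x ∈ f)) ∧ M.ncard = k}

/-- `ρ(K) = m` is `IsLeast (edgeCoverCards K) m`. -/
def edgeCoverCards {W : Type*} (K : SimpleGraph W) : Set ℕ :=
  {k | ∃ A : Set (Sym2 W), A ⊆ K.edgeSet ∧ (∀ x : W, ∃ e ∈ A, x ∈ e) ∧ A.ncard = k}

theorem injective_of_mem_of_pairwise_disjoint {α : Type*} {M : Set (Sym2 α)}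
    (hM : ∀ e ∈ M, ∀ f ∈ M, e ≠ f → ∀ x, ¬ (x ∈ e ∧ x ∈ f)) {φ : M → α}
    (hφ : ∀ e : M, φ e ∈ (e : Sym2 α)) : Injective φ := fun e f h =>
  Subtype.ext <| by_contra fun hne => hM e e.2 f f.2 hne (φ e) ⟨hφ e, h ▸ hφ f⟩

section subdivision

variable {V : Type*} {G : SimpleGraph V}

theorem exists_eq_of_mem_edgeSet_subdivision {e : Sym2 (V ⊕ G.edgeSet)}
    (he : e ∈ (subdivision G).edgeSet) :
    ∃ (v : V) (ε : G.edgeSet), v ∈ (ε : Sym2 V) ∧ e = s(.inl v, .inr ε) := by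
  induction e using Sym2.ind with
  | _ x y =>
    rcases x with v | ε <;> rcases y with w | κ
    · exact he.elim
    · exact ⟨v, κ, he, rfl⟩
    · exact ⟨w, ε, he, Sym2.eq_swap⟩
    · exact he.elim

theorem exists_injective_incidences_of_matching {M : Set (Sym2 (V ⊕ G.edgeSet))}
    (hM : M ⊆ (subdivision G).edgeSet)
    (hdisj : ∀ e ∈ M, ∀ f ∈ M, e ≠ f → ∀ x, ¬ (x ∈ e ∧ x ∈ f)) :
    ∃ (ι : M → V) (κ : M → G.edgeSet),
      Injective ι ∧ Injective κ ∧ ∀ e, ι e ∈ (κ e : Sym2 V) := by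
  choose ι κ hmem heq using fun e : M => exists_eq_of_mem_edgeSet_subdivision (hM e.2)
  refine ⟨ι, κ, ?_, ?_, hmem⟩
  · refine Injective.of_comp (f := Sum.inl)
      (injective_of_mem_of_pairwise_disjoint hdisj fun e => ?_)
    rw [heq e]
    exact Sym2.mem_mk_left _ _
  · refine Injective.of_comp (f := Sum.inr)
      (injective_of_mem_of_pairwise_disjoint hdisj fun e => ?_)
    rw [heq e]
    exact Sym2.mem_mk_right _ _

theorem exists_surjective_incidences_of_edgeCover {A : Set (Sym2 (V ⊕ G.edgeSet))}
    (hA : A ⊆ (subdivision G).edgeSet) (hcov : ∀ x, ∃ e ∈ A, x ∈ e) :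
    ∃ (ι : A → V) (κ : A → G.edgeSet),
      Surjective ι ∧ Surjective κ ∧ ∀ e, ι e ∈ (κ e : Sym2 V) := by
  choose ι κ hmem heq using fun e : A => exists_eq_of_mem_edgeSet_subdivision (hA e.2)
  have hcov' : ∀ x, ∃ e : A, x ∈ (e : Sym2 _) := fun x =>
    let ⟨e, he, hx⟩ := hcov x
    ⟨⟨e, he⟩, hx⟩
  refine ⟨ι, κ, fun v => ?_, fun ε => ?_, hmem⟩
  · obtain ⟨e, hv⟩ := hcov' (.inl v)
    rw [heq e] at hv
    exact ⟨e, by simpa [eq_comm] using hv⟩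
  · obtain ⟨e, hε⟩ := hcov' (.inr ε)
    rw [heq e] at hε
    exact ⟨e, by simpa [eq_comm] using hε⟩

theorem isGreatest_matchingCards_subdivision_iff [Finite V] :
    IsGreatest (matchingCards (subdivision G)) (Nat.card V) ↔
      ∃ g : V → G.edgeSet, Injective g ∧ ∀ v, v ∈ (g v : Sym2 V) := by
  constructor
  · rintro ⟨⟨M, hM, hdisj, hcard⟩, -⟩
    obtain ⟨ι, κ, hι, hκ, hmem⟩ := exists_injective_incidences_of_matching hM hdisj
    have hbij := hι.bijective_of_nat_card_le (by rw [Nat.card_coe_set_eq, hcard])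
    refine ⟨κ ∘ surjInv hbij.2, hκ.comp (injective_surjInv _), fun v => ?_⟩
    simpa only [comp_apply, surjInv_eq hbij.2] using hmem (surjInv hbij.2 v)
  · rintro ⟨g, hg, hmem⟩
    have hinj : Injective fun v => s(Sum.inl v, Sum.inr (g v)) := fun v w h =>
      (by simpa using h : v = w ∧ _).1
    refine ⟨⟨_, ?_, ?_, Set.ncard_range_of_injective hinj⟩, ?_⟩
    · rintro _ ⟨v, rfl⟩
      exact hmem v
    · rintro _ ⟨v, rfl⟩ _ ⟨w, rfl⟩ hne (x | ε) ⟨hv, hw⟩ <;>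
        simp only [Sym2.mem_iff, Sum.inl.injEq, Sum.inr.injEq, reduceCtorEq, or_false, false_or]
          at hv hw
      · exact hne (by rw [← hv, ← hw])
      · exact hne (by rw [hg (hv.symm.trans hw)])
    · rintro k ⟨M, hM, hdisj, rfl⟩
      obtain ⟨ι, -, hι, -⟩ := exists_injective_incidences_of_matching hM hdisj
      exact (Nat.card_coe_set_eq M).symm.trans_le (Nat.card_le_card_of_injective ι hι)

theorem isLeast_edgeCoverCards_subdivision_iff [Finite V] :
    IsLeast (edgeCoverCards (subdivision G)) G.edgeSet.ncard ↔
      ∃ f : G.edgeSet → V, Surjective f ∧ ∀ ε : G.edgeSet, f ε ∈ (ε : Sym2 V) := by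
  constructor
  · rintro ⟨⟨A, hA, hcov, hcard⟩, -⟩
    obtain ⟨ι, κ, hι, hκ, hmem⟩ := exists_surjective_incidences_of_edgeCover hA hcov
    have hbij := hκ.bijective_of_nat_card_le
      (by rw [Nat.card_coe_set_eq, Nat.card_coe_set_eq, hcard])
    refine ⟨ι ∘ surjInv hκ, hι.comp (leftInverse_surjInv hbij).surjective, fun ε => ?_⟩
    simpa only [comp_apply, surjInv_eq hκ] using hmem (surjInv hκ ε)
  · rintro ⟨f, hf, hmem⟩
    have hinj : Injective fun ε => s(Sum.inl (f ε), Sum.inr ε) := fun ε ε' h =>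
      (by simpa using h : _ ∧ ε = ε').2
    refine ⟨⟨_, ?_, ?_, (Set.ncard_range_of_injective hinj).trans (Nat.card_coe_set_eq _)⟩, ?_⟩
    · rintro _ ⟨ε, rfl⟩
      exact hmem ε
    · rintro (v | ε)
      · obtain ⟨ε, rfl⟩ := hf v
        exact ⟨_, ⟨ε, rfl⟩, Sym2.mem_mk_left _ _⟩
      · exact ⟨_, ⟨ε, rfl⟩, Sym2.mem_mk_right _ _⟩
    · rintro k ⟨A, hA, hcov, rfl⟩
      obtain ⟨-, κ, -, hκ, -⟩ := exists_surjective_incidences_of_edgeCover hA hcov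
      rw [← Nat.card_coe_set_eq, ← Nat.card_coe_set_eq]
      exact Nat.card_le_card_of_surjective κ hκ

end subdivision

theorem atLeastOneCycle_tfae_matching_general {V : Type*} [Fintype V] (G : SimpleGraph V)
    (hconn : G.Connected) :
    List.TFAE
      [ ∃ H : G.Subgraph, H.IsCycleSubgraph,
        IsGreatest {k : ℕ | ∃ M : Set (Sym2 (V ⊕ G.edgeSet)),
            M ⊆ (subdivision G).edgeSet ∧
            (∀ e ∈ M, ∀ f ∈ M, e ≠ f → ∀ x, ¬ (x ∈ e ∧ x ∈ f)) ∧
            M.ncard = k}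
          (Fintype.card V),
        IsLeast {k : ℕ | ∃ A : Set (Sym2 (V ⊕ G.edgeSet)),
            A ⊆ (subdivision G).edgeSet ∧
            (∀ x : V ⊕ G.edgeSet, ∃ e ∈ A, x ∈ e) ∧
            A.ncard = k}
          G.edgeSet.ncard ] := by
  have hβ := isGreatest_matchingCards_subdivision_iff (G := G)
  have hρ := isLeast_edgeCoverCards_subdivision_iff (G := G)
  rw [Nat.card_eq_fintype_card] at hβ
  tfae_have 1 ↔ 2 := by
    rw [SimpleGraph.exists_isCycleSubgraph_iff_not_isAcyclic,
      hconn.not_isAcyclic_iff_exists_injective_incidentEdge]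
    exact hβ.symm
  tfae_have 2 ↔ 3 := hβ.trans <|
    (exists_injective_rel_iff_exists_surjective_rel
      (r := fun v (ε : G.edgeSet) => v ∈ (ε : Sym2 V)) fun ε => ⟨_, Sym2.out_fst_mem ε.1⟩).trans
      hρ.symm
  tfae_finish

/-- For a finite connected simple graph `G` of order `n ≥ 2` and size `m`,
the following are equivalent: (i) `G` contains at least one cycle;
(ii) `β(S(G)) = |V| = n`; (iii) `ρ(S(G)) = |S| = m`. -/
theorem atLeastOneCycle_tfae_matching {V : Type*} [Fintype V] (G : SimpleGraph V)
    (hconn : G.Connected) (hn : 2 ≤ Fintype.card V) :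
    List.TFAE
      [ ∃ H : G.Subgraph, H.IsCycleSubgraph,
        IsGreatest {k : ℕ | ∃ M : Set (Sym2 (V ⊕ G.edgeSet)),
            M ⊆ (subdivision G).edgeSet ∧
            (∀ e ∈ M, ∀ f ∈ M, e ≠ f → ∀ x, ¬ (x ∈ e ∧ x ∈ f)) ∧
            M.ncard = k}
          (Fintype.card V),
        IsLeast {k : ℕ | ∃ A : Set (Sym2 (V ⊕ G.edgeSet)),
            A ⊆ (subdivision G).edgeSet ∧
            (∀ x : V ⊕ G.edgeSet, ∃ e ∈ A, x ∈ e) ∧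
            A.ncard = k}
          G.edgeSet.ncard ] :=
  atLeastOneCycle_tfae_matching_general G hconn
end

section
/- Let P_n denote the path graph on n vertices and C_n the cycle graph on n vertices. Then (i) for all n ≥ 2, the differential of the subdivision graph of the path satisfies ∂(S(P_n)) = ⌊(2n−1)/3⌋, and (ii) for all n ≥ 3, the differential of the subdivision graph of the cycle satisfies ∂(S(C_n)) = ⌊2n/3⌋. -/
/-- `B(D)`: the set of vertices outside `D` that have a neighbour in `D`. -/
def extBoundary {W : Type*} (H : SimpleGraph W) (D : Set W) : Set W :=
  {v | v ∉ D ∧ ∃ u ∈ D, H.Adj u v}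

/-- The differential of a set of vertices: `∂(D) = |B(D)| - |D|`. -/
noncomputable def setDifferential {W : Type*} (H : SimpleGraph W) (D : Set W) : ℤ :=
  ((extBoundary H D).ncard : ℤ) - (D.ncard : ℤ)

/-- The differential of a graph: `∂(H) = max {∂(D) : D ⊆ V(H)}`. -/
noncomputable def graphDifferential {W : Type*} (H : SimpleGraph W) : ℤ :=
  sSup {x : ℤ | ∃ D : Set W, x = setDifferential H D}

/-!
In a graph of maximum degree at most `2` every set `D` has `|B(D)| ≤ 2|D|`, and `B(D)` is disjoint
from `D`, so `3 ∂(D) ≤ m` on `m` vertices. On `P_m` (hence on `C_m ⊇ P_m`) the bound `⌊m/3⌋` is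
attained by the centres `3j + 1` of `⌊m/3⌋` disjoint blocks of three consecutive vertices. Walking
along `P_n` or `C_n` and listing vertices and edges alternately gives `S(P_n) ≅ P_{2n-1}` and
`S(C_n) ≅ C_{2n}`.
-/

open SimpleGraph

section Differential

variable {V W : Type*} {G G' : SimpleGraph V} {H : SimpleGraph W}

lemma extBoundary_image (e : G ≃g H) (D : Set V) :
    extBoundary H (e '' D) = e '' extBoundary G D := by
  ext w
  obtain ⟨v, rfl⟩ := e.surjective w
  simp only [extBoundary, Set.mem_ofPred_eq, e.injective.mem_set_image, Set.exists_mem_image,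
    e.map_adj_iff]

lemma setDifferential_image (e : G ≃g H) (D : Set V) :
    setDifferential H (e '' D) = setDifferential G D := by
  simp only [setDifferential, extBoundary_image, Set.ncard_image_of_injective _ e.injective]

lemma graphDifferential_congr (e : G ≃g H) : graphDifferential G = graphDifferential H := by
  unfold graphDifferential
  congr 1
  ext x
  constructor
  · rintro ⟨D, rfl⟩
    exact ⟨e '' D, (setDifferential_image e D).symm⟩
  · rintro ⟨D, rfl⟩
    exact ⟨e.symm '' D, (setDifferential_image e.symm D).symm⟩

lemma extBoundary_mono (h : G ≤ G') (D : Set V) : extBoundary G D ⊆ extBoundary G' D :=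
  fun _ ⟨hv, u, hu, huv⟩ => ⟨hv, u, hu, h huv⟩

lemma ncard_extBoundary_add_ncard_le [Finite V] (D : Set V) :
    (extBoundary G D).ncard + D.ncard ≤ Nat.card V := by
  rw [← Set.ncard_union_eq (Set.disjoint_left.mpr fun _ hv => hv.1)]
  exact Set.ncard_le_card _

lemma ncard_extBoundary_le [Fintype V] [DecidableRel G.Adj] {k : ℕ}
    (hdeg : ∀ v, G.degree v ≤ k) (D : Set V) : (extBoundary G D).ncard ≤ k * D.ncard := by
  classical
  have hsub : extBoundary G D ⊆ ↑(D.toFinset.biUnion fun u => G.neighborFinset u) :=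
    fun v ⟨_, u, hu, huv⟩ => by simpa using ⟨u, hu, huv⟩
  calc (extBoundary G D).ncard ≤ (D.toFinset.biUnion fun u => G.neighborFinset u).card :=
        (Set.ncard_le_ncard hsub).trans_eq (Set.ncard_coe_finset _)
    _ ≤ ∑ u ∈ D.toFinset, G.degree u := Finset.card_biUnion_le
    _ ≤ D.toFinset.card * k := Finset.sum_le_card_nsmul _ _ _ fun u _ => hdeg u
    _ = k * D.ncard := by rw [Set.ncard_eq_toFinset_card', mul_comm]

lemma setDifferential_mono [Finite V] (h : G ≤ G') (D : Set V) :
    setDifferential G D ≤ setDifferential G' D := by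
  unfold setDifferential
  have := Set.ncard_le_ncard (extBoundary_mono h D)
  omega

lemma setDifferential_le_graphDifferential [Finite V] (D : Set V) :
    setDifferential G D ≤ graphDifferential G := by
  refine le_csSup ⟨Nat.card V, ?_⟩ ⟨D, rfl⟩
  rintro _ ⟨D', rfl⟩
  have := ncard_extBoundary_add_ncard_le (G := G) D'
  unfold setDifferential
  omega

lemma graphDifferential_le {c : ℤ} (h : ∀ D, setDifferential G D ≤ c) :
    graphDifferential G ≤ c :=
  csSup_le ⟨_, ∅, rfl⟩ fun _ ⟨D, hD⟩ => hD ▸ h D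

lemma graphDifferential_mono [Finite V] (h : G ≤ G') :
    graphDifferential G ≤ graphDifferential G' :=
  graphDifferential_le fun D => (setDifferential_mono h D).trans
    (setDifferential_le_graphDifferential D)

lemma setDifferential_mul_le [Fintype V] [DecidableRel G.Adj] {k : ℕ} (hk : 1 ≤ k)
    (hdeg : ∀ v, G.degree v ≤ k) (D : Set V) :
    (k + 1) * setDifferential G D ≤ (k - 1) * Fintype.card V := by
  have hB := ncard_extBoundary_le hdeg D
  have hV := ncard_extBoundary_add_ncard_le (G := G) D
  rw [Nat.card_eq_fintype_card] at hV
  unfold setDifferential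
  nlinarith

end Differential

section PathCycle

lemma le_graphDifferential_pathGraph (m : ℕ) :
    ((m / 3 : ℕ) : ℤ) ≤ graphDifferential (pathGraph m) := by
  set q := m / 3
  let centre : Fin q → Fin m := fun j => ⟨3 * j + 1, by omega⟩
  let blockEnd : Fin q × Fin 2 → Fin m := fun p => ⟨3 * p.1 + 2 * p.2, by omega⟩
  have hcentre : Function.Injective centre := fun a b h => by
    simp only [centre, Fin.mk.injEq] at h; omega
  have hblockEnd : Function.Injective blockEnd := fun a b h => by
    simp only [blockEnd, Fin.mk.injEq] at h; ext <;> omega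
  have hsub : Set.range blockEnd ⊆ extBoundary (pathGraph m) (Set.range centre) := by
    rintro _ ⟨⟨j, b⟩, rfl⟩
    refine ⟨?_, centre j, ⟨j, rfl⟩, ?_⟩
    · rintro ⟨i, hi⟩
      simp only [centre, blockEnd, Fin.mk.injEq] at hi
      omega
    · simp only [centre, blockEnd, pathGraph_adj]
      omega
  have hB := Set.ncard_le_ncard hsub
  rw [Set.ncard_range_of_injective hblockEnd] at hB
  refine le_trans ?_ (setDifferential_le_graphDifferential (Set.range centre))
  simp only [setDifferential, Set.ncard_range_of_injective hcentre, Nat.card_eq_fintype_card,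
    Fintype.card_prod, Fintype.card_fin] at hB ⊢
  omega

lemma graphDifferential_cycleGraph_le {m : ℕ} (hm : 3 ≤ m) :
    graphDifferential (cycleGraph m) ≤ ((m / 3 : ℕ) : ℤ) := by
  obtain ⟨k, rfl⟩ : ∃ k, m = k + 3 := ⟨m - 3, by omega⟩
  refine graphDifferential_le fun D => ?_
  have := setDifferential_mul_le one_le_two (fun _ => cycleGraph_degree_three_le.le) D
  simp only [Fintype.card_fin] at this
  omega

theorem graphDifferential_pathGraph {m : ℕ} (hm : 3 ≤ m) :
    graphDifferential (pathGraph m) = ((m / 3 : ℕ) : ℤ) :=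
  le_antisymm ((graphDifferential_mono pathGraph_le_cycleGraph).trans
    (graphDifferential_cycleGraph_le hm)) (le_graphDifferential_pathGraph m)

theorem graphDifferential_cycleGraph {m : ℕ} (hm : 3 ≤ m) :
    graphDifferential (cycleGraph m) = ((m / 3 : ℕ) : ℤ) :=
  le_antisymm (graphDifferential_cycleGraph_le hm)
    ((le_graphDifferential_pathGraph m).trans (graphDifferential_mono pathGraph_le_cycleGraph))

end PathCycle

section Subdivision

variable {V : Type*} {G : SimpleGraph V}

@[simp] lemma subdivision_adj_inl_inr {v : V} {e : G.edgeSet} :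
    (subdivision G).Adj (.inl v) (.inr e) ↔ v ∈ (e : Sym2 V) := Iff.rfl

@[simp] lemma subdivision_adj_inr_inl {v : V} {e : G.edgeSet} :
    (subdivision G).Adj (.inr e) (.inl v) ↔ v ∈ (e : Sym2 V) := Iff.rfl

@[simp] lemma subdivision_not_adj_inl_inl {v w : V} : ¬(subdivision G).Adj (.inl v) (.inl w) :=
  id

@[simp] lemma subdivision_not_adj_inr_inr {e f : G.edgeSet} :
    ¬(subdivision G).Adj (.inr e) (.inr f) :=
  id

end Subdivision

section PathSubdivision

lemma exists_eq_of_mem_edgeSet_pathGraph {n : ℕ} {e : Sym2 (Fin n)}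
    (he : e ∈ (pathGraph n).edgeSet) :
    ∃ (i : ℕ) (hi : i + 1 < n), e = s(⟨i, by omega⟩, ⟨i + 1, hi⟩) := by
  induction e using Sym2.ind with | _ u w =>
  rw [mem_edgeSet, pathGraph_adj] at he
  rcases he with h | h
  · exact ⟨u, by omega, by simp [Fin.ext_iff]; omega⟩
  · exact ⟨w, by omega, by simp [Fin.ext_iff]; omega⟩

def pathGraphToSubdivision (n : ℕ) (j : Fin (2 * n - 1)) : Fin n ⊕ (pathGraph n).edgeSet :=
  if h : j.val % 2 = 0 then .inl ⟨j / 2, by omega⟩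
  else .inr ⟨s(⟨j / 2, by omega⟩, ⟨j / 2 + 1, by omega⟩), by simp [pathGraph_adj]⟩

lemma pathGraphToSubdivision_injective (n : ℕ) :
    Function.Injective (pathGraphToSubdivision n) := by
  intro a b h
  simp only [pathGraphToSubdivision] at h
  split_ifs at h <;> simp [Fin.ext_iff] at h <;> ext <;> omega

lemma pathGraphToSubdivision_surjective (n : ℕ) :
    Function.Surjective (pathGraphToSubdivision n) := by
  rintro (v | ⟨e, he⟩)
  · exact ⟨⟨2 * v, by omega⟩, by simp [pathGraphToSubdivision]⟩
  · obtain ⟨i, hi, rfl⟩ := exists_eq_of_mem_edgeSet_pathGraph he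
    exact ⟨⟨2 * i + 1, by omega⟩, by simp [pathGraphToSubdivision]; omega⟩

lemma pathGraphToSubdivision_adj_iff (n : ℕ) {a b : Fin (2 * n - 1)} :
    (subdivision (pathGraph n)).Adj (pathGraphToSubdivision n a) (pathGraphToSubdivision n b) ↔
      (pathGraph _).Adj a b := by
  simp only [pathGraphToSubdivision, pathGraph_adj]
  split_ifs <;> simp [Fin.ext_iff] <;> omega

noncomputable def pathGraphIsoSubdivision (n : ℕ) :
    pathGraph (2 * n - 1) ≃g subdivision (pathGraph n) where
  toEquiv := .ofBijective _
    ⟨pathGraphToSubdivision_injective n, pathGraphToSubdivision_surjective n⟩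
  map_rel_iff' := pathGraphToSubdivision_adj_iff n

end PathSubdivision

section CycleSubdivision

lemma val_finRotate {n : ℕ} (i : Fin n) :
    (finRotate n i).val = if i.val + 1 = n then 0 else i.val + 1 := by
  cases n with
  | zero => exact i.elim0
  | succ n => rw [coe_finRotate]; simp [Fin.ext_iff]

lemma cycleGraph_adj_iff_val {n : ℕ} (hn : 2 ≤ n) {u v : Fin n} :
    (cycleGraph n).Adj u v ↔ u.val + 1 = v.val ∨ v.val + 1 = u.val ∨
      (u.val = 0 ∧ v.val + 1 = n) ∨ (v.val = 0 ∧ u.val + 1 = n) := by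
  rw [cycleGraph_adj']
  rcases lt_trichotomy u v with h | rfl | h
  · rw [Fin.coe_sub_iff_lt.mpr h, Fin.coe_sub_iff_le.mpr h.le]
    omega
  · rw [Fin.coe_sub_iff_le.mpr le_rfl]
    omega
  · rw [Fin.coe_sub_iff_le.mpr h.le, Fin.coe_sub_iff_lt.mpr h]
    omega

lemma cycleGraph_adj_finRotate {n : ℕ} (hn : 2 ≤ n) (i : Fin n) :
    (cycleGraph n).Adj i (finRotate n i) := by
  rw [cycleGraph_adj_iff_val hn, val_finRotate]
  split_ifs <;> omega

lemma exists_eq_of_mem_edgeSet_cycleGraph {n : ℕ} (hn : 2 ≤ n) {e : Sym2 (Fin n)}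
    (he : e ∈ (cycleGraph n).edgeSet) : ∃ i, e = s(i, finRotate n i) := by
  induction e using Sym2.ind with | _ u w =>
  by_cases hw : w = finRotate n u
  · exact ⟨u, hw ▸ rfl⟩
  · rw [mem_edgeSet, cycleGraph_adj_iff_val hn] at he
    rw [Fin.ext_iff, val_finRotate] at hw
    refine ⟨w, Sym2.eq_swap.trans ?_⟩
    simp only [Sym2.eq_iff, Fin.ext_iff, val_finRotate, true_and]
    split_ifs at hw ⊢ <;> omega

def cycleGraphToSubdivision (n : ℕ) (hn : 2 ≤ n) (j : Fin (2 * n)) :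
    Fin n ⊕ (cycleGraph n).edgeSet :=
  if j.val % 2 = 0 then .inl ⟨j / 2, by omega⟩
  else
    let i : Fin n := ⟨j / 2, by omega⟩
    .inr ⟨s(i, finRotate n i), (mem_edgeSet _).mpr (cycleGraph_adj_finRotate hn i)⟩

lemma cycleGraphToSubdivision_injective {n : ℕ} (hn : 3 ≤ n) :
    Function.Injective (cycleGraphToSubdivision n (by omega)) := by
  intro a b h
  simp only [cycleGraphToSubdivision] at h
  split_ifs at h <;>
    simp [-finRotate_apply, Fin.ext_iff, val_finRotate, ite_eq_iff, eq_ite_iff] at h <;>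
    ext <;> omega

lemma cycleGraphToSubdivision_surjective {n : ℕ} (hn : 2 ≤ n) :
    Function.Surjective (cycleGraphToSubdivision n hn) := by
  rintro (v | ⟨e, he⟩)
  · exact ⟨⟨2 * v, by omega⟩, by simp [cycleGraphToSubdivision]⟩
  · obtain ⟨i, rfl⟩ := exists_eq_of_mem_edgeSet_cycleGraph hn he
    have hi : (2 * i.val + 1) / 2 = i.val := by omega
    exact ⟨⟨2 * i + 1, by omega⟩, by simp [cycleGraphToSubdivision, hi]⟩

lemma cycleGraphToSubdivision_adj_iff {n : ℕ} (hn : 2 ≤ n) {a b : Fin (2 * n)} :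
    (subdivision (cycleGraph n)).Adj (cycleGraphToSubdivision n hn a)
      (cycleGraphToSubdivision n hn b) ↔ (cycleGraph _).Adj a b := by
  rw [cycleGraph_adj_iff_val (by omega)]
  simp only [cycleGraphToSubdivision]
  split_ifs <;> simp [-finRotate_apply, Fin.ext_iff, val_finRotate, eq_ite_iff] <;> omega

noncomputable def cycleGraphIsoSubdivision {n : ℕ} (hn : 3 ≤ n) :
    cycleGraph (2 * n) ≃g subdivision (cycleGraph n) where
  toEquiv := .ofBijective _
    ⟨cycleGraphToSubdivision_injective hn, cycleGraphToSubdivision_surjective (by omega)⟩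
  map_rel_iff' := cycleGraphToSubdivision_adj_iff (by omega)

end CycleSubdivision

/-- (i) For all `n ≥ 2`, `∂(S(P_n)) = ⌊(2n - 1)/3⌋`; (ii) for all `n ≥ 3`,
`∂(S(C_n)) = ⌊2n/3⌋`. -/
theorem differential_subdivision_path_cycle :
    (∀ n : ℕ, 2 ≤ n →
        graphDifferential (subdivision (SimpleGraph.pathGraph n)) = ((2 * n - 1) / 3 : ℕ)) ∧
      (∀ n : ℕ, 3 ≤ n →
        graphDifferential (subdivision (SimpleGraph.cycleGraph n)) = ((2 * n) / 3 : ℕ)) := by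
  constructor
  · intro n hn
    rw [← graphDifferential_congr (pathGraphIsoSubdivision n)]
    exact graphDifferential_pathGraph (by omega)
  · intro n hn
    rw [← graphDifferential_congr (cycleGraphIsoSubdivision hn)]
    exact graphDifferential_cycleGraph (by omega)
end
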